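/- arXiv:1804.09090 — 6 statements merged into one kernel-verified Lean document; each statement's English description precedes it below -/
import Mathlib

section
/- Let $\mathbb{J}$ be a symmetric real $n\times n$ matrix and $\mathbb{I}(\Omega) = \mathbb{J}\Omega + \Omega\mathbb{J}$. If $a, b \in \mathbb{R}^n$ are linearly independent, then $a\wedge b = ab^T - ba^T$ is an eigenvector of $\mathbb{I}$ if and only if the plane spanned by $a$ and $b$ is invariant under $\mathbb{J}$. Moreover, if this plane is spanned by eigenvectors of $\mathbb{J}$ with eigenvalues $J_i$ and $J_j$, then $\mathbb{I}(a\wedge b) = (J_i + J_j)(a\wedge b)$. -/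
open Matrix

/-- The wedge of two vectors: `a ∧ b = abᵀ - baᵀ`. -/
def wedge {n : ℕ} (a b : Fin n → ℝ) : Matrix (Fin n) (Fin n) ℝ :=
  vecMulVec a b - vecMulVec b a

lemma vecMulVec_mulVec' {n : ℕ} (a b v : Fin n → ℝ) :
    (vecMulVec a b).mulVec v = (b ⬝ᵥ v) • a := by
  ext i
  simp [vecMulVec, mulVec, dotProduct, Finset.sum_mul, Finset.mul_sum, mul_comm, mul_left_comm]

lemma wedge_mulVec {n : ℕ} (a b v : Fin n → ℝ) :
    (wedge a b).mulVec v = (b ⬝ᵥ v) • a - (a ⬝ᵥ v) • b := by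
  rw [wedge, sub_mulVec, vecMulVec_mulVec', vecMulVec_mulVec']

lemma mul_vecMulVec' {n : ℕ} (J : Matrix (Fin n) (Fin n) ℝ) (a b : Fin n → ℝ) :
    J * vecMulVec a b = vecMulVec (J.mulVec a) b := by
  ext i j
  simp only [mul_apply, vecMulVec_apply, mulVec, dotProduct]
  rw [Finset.sum_mul]
  exact Finset.sum_congr rfl fun k _ => (mul_assoc _ _ _).symm

lemma vecMulVec_mul' {n : ℕ} (J : Matrix (Fin n) (Fin n) ℝ) (a b : Fin n → ℝ) :
    vecMulVec a b * J = vecMulVec a (Jᵀ.mulVec b) := by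
  ext i j
  simp only [mul_apply, vecMulVec_apply, mulVec, dotProduct, transpose_apply]
  rw [Finset.mul_sum]
  exact Finset.sum_congr rfl fun k _ => by ring

lemma key_identity {n : ℕ} (J : Matrix (Fin n) (Fin n) ℝ) (hJ : Jᵀ = J) (a b : Fin n → ℝ) :
    J * wedge a b + wedge a b * J = wedge (J.mulVec a) b + wedge a (J.mulVec b) := by
  unfold wedge
  rw [mul_sub, sub_mul, mul_vecMulVec', mul_vecMulVec', vecMulVec_mul', vecMulVec_mul', hJ]
  abel

lemma exists_dual {n : ℕ} {a b : Fin n → ℝ} (hab : LinearIndependent ℝ ![a, b]) (k : Fin 2) :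
    ∃ v : Fin n → ℝ, ∀ j : Fin 2, ![a, b] j ⬝ᵥ v = if j = k then 1 else 0 := by
  classical
  let B := Module.Basis.span hab
  obtain ⟨g, hg⟩ := LinearMap.exists_extend (B.coord k)
  refine ⟨fun i => g (Pi.single i 1), fun j => ?_⟩
  have hdot : ∀ x : Fin n → ℝ, x ⬝ᵥ (fun i => g (Pi.single i 1)) = g x := by
    intro x
    have hx : x = ∑ i, x i • (Pi.single i 1 : Fin n → ℝ) := by
      ext j; simp [Pi.single_apply]
    conv_rhs => rw [hx]
    rw [map_sum]
    simp [dotProduct]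
  rw [hdot]
  have hmem : ![a, b] j ∈ Submodule.span ℝ (Set.range ![a, b]) :=
    Submodule.subset_span (Set.mem_range_self j)
  have h1 : g (![a, b] j) = B.coord k ⟨![a, b] j, hmem⟩ := by
    have := LinearMap.congr_fun hg ⟨![a, b] j, hmem⟩
    simpa using this
  have hBj : (⟨![a, b] j, hmem⟩ : Submodule.span ℝ (Set.range ![a, b])) = B j :=
    (Module.Basis.span_apply hab j).symm
  rw [h1, hBj, Module.Basis.coord_apply, Module.Basis.repr_self, Finsupp.single_apply]

theorem stmt3 {n : ℕ} (J : Matrix (Fin n) (Fin n) ℝ) (hJ : Jᵀ = J)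
    (a b : Fin n → ℝ) (hab : LinearIndependent ℝ ![a, b]) :
    ((∃ μ : ℝ, J * wedge a b + wedge a b * J = μ • wedge a b) ↔
      ∀ x ∈ Submodule.span ℝ ({a, b} : Set (Fin n → ℝ)),
        J.mulVec x ∈ Submodule.span ℝ ({a, b} : Set (Fin n → ℝ))) ∧
    (∀ Ji Jj : ℝ, J.mulVec a = Ji • a → J.mulVec b = Jj • b →
      J * wedge a b + wedge a b * J = (Ji + Jj) • wedge a b) := by
  have ha : a ∈ Submodule.span ℝ ({a, b} : Set (Fin n → ℝ)) :=
    Submodule.subset_span (Set.mem_insert _ _)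
  have hb : b ∈ Submodule.span ℝ ({a, b} : Set (Fin n → ℝ)) :=
    Submodule.subset_span (Set.mem_insert_of_mem _ rfl)
  have hwl : ∀ s t : ℝ, wedge (s • a + t • b) b = s • wedge a b := by
    intro s t; ext i j; simp [wedge, vecMulVec]; ring
  have hwr : ∀ s t : ℝ, wedge a (s • a + t • b) = t • wedge a b := by
    intro s t; ext i j; simp [wedge, vecMulVec]; ring
  constructor
  · constructor
    · rintro ⟨μ, hμ⟩ x hx
      have hJa : J.mulVec a ∈ Submodule.span ℝ ({a, b} : Set (Fin n → ℝ)) := by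
        obtain ⟨v, hv⟩ := exists_dual hab 1
        have hav : a ⬝ᵥ v = 0 := by simpa using hv 0
        have hbv : b ⬝ᵥ v = 1 := by simpa using hv 1
        have h := congrArg (fun M => M.mulVec v) hμ
        simp only [add_mulVec, smul_mulVec, ← mulVec_mulVec] at h
        rw [wedge_mulVec, wedge_mulVec, hav, hbv] at h
        simp only [one_smul, zero_smul, sub_zero] at h
        have h3 : J.mulVec a = μ • a - ((b ⬝ᵥ J.mulVec v) • a - (a ⬝ᵥ J.mulVec v) • b) :=
          eq_sub_of_add_eq h
        rw [h3]
        exact Submodule.sub_mem _ (Submodule.smul_mem _ _ ha)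
          (Submodule.sub_mem _ (Submodule.smul_mem _ _ ha) (Submodule.smul_mem _ _ hb))
      have hJb : J.mulVec b ∈ Submodule.span ℝ ({a, b} : Set (Fin n → ℝ)) := by
        obtain ⟨v, hv⟩ := exists_dual hab 0
        have hav : a ⬝ᵥ v = 1 := by simpa using hv 0
        have hbv : b ⬝ᵥ v = 0 := by simpa using hv 1
        have h := congrArg (fun M => M.mulVec v) hμ
        simp only [add_mulVec, smul_mulVec, ← mulVec_mulVec] at h
        rw [wedge_mulVec, wedge_mulVec, hav, hbv] at h
        simp only [one_smul, zero_smul, zero_sub, mulVec_neg, smul_neg] at h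
        have h3 : -(J.mulVec b) =
            -(μ • b) - ((b ⬝ᵥ J.mulVec v) • a - (a ⬝ᵥ J.mulVec v) • b) :=
          eq_sub_of_add_eq h
        rw [← Submodule.neg_mem_iff, h3]
        exact Submodule.sub_mem _ (Submodule.neg_mem _ (Submodule.smul_mem _ _ hb))
          (Submodule.sub_mem _ (Submodule.smul_mem _ _ ha) (Submodule.smul_mem _ _ hb))
      induction hx using Submodule.span_induction with
      | mem y hy =>
        rcases hy with rfl | hy
        · exact hJa
        · rw [Set.mem_singleton_iff] at hy; subst hy; exact hJb
      | zero => rw [mulVec_zero]; exact Submodule.zero_mem _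
      | add y z _ _ hy hz => rw [mulVec_add]; exact Submodule.add_mem _ hy hz
      | smul c y _ hy => rw [mulVec_smul]; exact Submodule.smul_mem _ _ hy
    · intro h
      obtain ⟨α, β, hab1⟩ := Submodule.mem_span_pair.mp (h a ha)
      obtain ⟨γ, δ, hab2⟩ := Submodule.mem_span_pair.mp (h b hb)
      refine ⟨α + δ, ?_⟩
      rw [key_identity J hJ a b, ← hab1, ← hab2, hwl, hwr, ← add_smul]
  · intro Ji Jj hia hjb
    rw [key_identity J hJ a b, hia, hjb]
    have h1 : wedge (Ji • a) b = Ji • wedge a b := by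
      have := hwl Ji 0; simpa using this
    have h2 : wedge a (Jj • b) = Jj • wedge a b := by
      have := hwr 0 Jj; simpa using this
    rw [h1, h2, ← add_smul]
end

section
/- Let $n \geq 4$ and let $J_1,\dots,J_n$ and $A_1,\dots,A_n$ be real numbers satisfying $J_i + J_j = A_iA_j$ for all $i \neq j$. Then at least $n-1$ of the numbers $A_1,\dots,A_n$ are equal, and consequently at least $n-1$ of the numbers $J_1,\dots,J_n$ are equal. -/
lemma exists_ne3' {n : ℕ} (hn : 4 ≤ n) (a b c : Fin n) :
    ∃ m : Fin n, m ≠ a ∧ m ≠ b ∧ m ≠ c := by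
  by_contra hcon
  push_neg at hcon
  have hsub : (Finset.univ : Finset (Fin n)) ⊆ {a, b, c} := by
    intro m _
    simp only [Finset.mem_insert, Finset.mem_singleton]
    by_contra hm
    push_neg at hm
    exact hm.2.2 (hcon m hm.1 hm.2.1)
  have h1 : ({a, b, c} : Finset (Fin n)).card ≤ 3 := by
    have i1 := Finset.card_insert_le a ({b, c} : Finset (Fin n))
    have i2 := Finset.card_insert_le b ({c} : Finset (Fin n))
    simp only [Finset.card_singleton] at i1 i2
    omega
  have h2 := Finset.card_le_card hsub
  simp only [Finset.card_univ, Fintype.card_fin] at h2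
  omega

theorem stmt12 {n : ℕ} (hn : 4 ≤ n) (J A : Fin n → ℝ)
    (h : ∀ i j : Fin n, i ≠ j → J i + J j = A i * A j) :
    (∃ i : Fin n, ∀ j k : Fin n, j ≠ i → k ≠ i → A j = A k) ∧
    (∃ i : Fin n, ∀ j k : Fin n, j ≠ i → k ≠ i → J j = J k) := by
  -- key identity
  have key : ∀ j k m : Fin n, m ≠ j → m ≠ k → A m * (A j - A k) = J j - J k := by
    intro j k m hmj hmk
    have h1 := h m j hmj
    have h2 := h m k hmk
    ring_nf
    linarith [h1, h2]
  -- cancellation consequence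
  have canc : ∀ j k m m' : Fin n, A j ≠ A k → m ≠ j → m ≠ k → m' ≠ j → m' ≠ k →
      A m = A m' := by
    intro j k m m' hAjk hmj hmk hm'j hm'k
    have e1 := key j k m hmj hmk
    have e2 := key j k m' hm'j hm'k
    have hd : A j - A k ≠ 0 := sub_ne_zero_of_ne hAjk
    have : A m * (A j - A k) = A m' * (A j - A k) := by rw [e1, e2]
    exact mul_right_cancel₀ hd this
  -- first part
  have hA : ∃ i : Fin n, ∀ j k : Fin n, j ≠ i → k ≠ i → A j = A k := by
    by_cases hall : ∀ j k : Fin n, A j = A k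
    · obtain ⟨m, -, -, -⟩ := exists_ne3' hn ⟨0, by omega⟩ ⟨0, by omega⟩ ⟨0, by omega⟩
      exact ⟨m, fun j k _ _ => hall j k⟩
    · push_neg at hall
      obtain ⟨j, k, hjk⟩ := hall
      obtain ⟨p, hpj, hpk, -⟩ := exists_ne3' hn j k k
      by_cases hjp : A j = A p
      · -- everything except k is equal
        refine ⟨k, fun r s hr hs => ?_⟩
        have hr' : A r = A p := by
          by_cases hrj : r = j
          · rw [hrj]; exact hjp
          · exact canc j k r p hjk hrj hr hpj hpk
        have hs' : A s = A p := by
          by_cases hsj : s = j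
          · rw [hsj]; exact hjp
          · exact canc j k s p hjk hsj hs hpj hpk
        rw [hr', hs']
      · -- A j ≠ A p; everything except j is equal
        refine ⟨j, fun r s hr hs => ?_⟩
        have hr' : A r = A p := by
          by_cases hrp : r = p
          · rw [hrp]
          · have hq := canc j p r r hjp hr hrp hr hrp
            -- that's trivial; instead use a fresh q
            obtain ⟨q, hqj, hqk, hqp⟩ := exists_ne3' hn j k p
            have h1 : A r = A q := canc j p r q hjp hr hrp hqj hqp
            have h2 : A q = A p := canc j k q p hjk hqj hqk hpj hpk
            rw [h1, h2]
        have hs' : A s = A p := by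
          by_cases hsp : s = p
          · rw [hsp]
          · obtain ⟨q, hqj, hqk, hqp⟩ := exists_ne3' hn j k p
            have h1 : A s = A q := canc j p s q hjp hs hsp hqj hqp
            have h2 : A q = A p := canc j k q p hjk hqj hqk hpj hpk
            rw [h1, h2]
        rw [hr', hs']
  obtain ⟨i, hi⟩ := hA
  refine ⟨⟨i, hi⟩, ⟨i, fun j k hj hk => ?_⟩⟩
  by_cases hjk : j = k
  · rw [hjk]
  · obtain ⟨m, hmj, hmk, hmi⟩ := exists_ne3' hn j k i
    have h1 := h j m (fun e => hmj e.symm)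
    have h2 := h k m (fun e => hmk e.symm)
    have hA' : A j = A k := hi j k hj hk
    rw [hA'] at h1
    linarith
end

section
/- Let $\mathbb{J} = \mathrm{diag}(J_1, J_2, J_3)$ with $J_i + J_j > 0$ for all $i \neq j$, let $\mathbb{I}(\Omega) = \mathbb{J}\Omega + \Omega\mathbb{J}$, and define $A = \mathrm{diag}(A_1, A_2, A_3)$ with $A_i = \sqrt{(J_i+J_j)(J_i+J_k)/(J_j+J_k)}$ for $\{i,j,k\} = \{1,2,3\}$. Then for all $a, b \in \mathbb{R}^3$, $\mathbb{I}(ab^T - ba^T) = (Aa)(Ab)^T - (Ab)(Aa)^T$. -/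
open Matrix

lemma sqrt_helper (p q r : ℝ) (hp : 0 < p) (hq : 0 < q) (hr : 0 < r) :
    Real.sqrt (p * q / r) * Real.sqrt (p * r / q) = p := by
  rw [← Real.sqrt_mul (by positivity)]
  have : p * q / r * (p * r / q) = p ^ 2 := by field_simp
  rw [this, Real.sqrt_sq hp.le]

set_option maxHeartbeats 1000000 in
theorem stmt13 (J1 J2 J3 : ℝ)
    (h12 : 0 < J1 + J2) (h13 : 0 < J1 + J3) (h23 : 0 < J2 + J3)
    (J A : Matrix (Fin 3) (Fin 3) ℝ)
    (hJ : J = Matrix.diagonal ![J1, J2, J3])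
    (hA : A = Matrix.diagonal
      ![Real.sqrt ((J1 + J2) * (J1 + J3) / (J2 + J3)),
        Real.sqrt ((J2 + J1) * (J2 + J3) / (J1 + J3)),
        Real.sqrt ((J3 + J1) * (J3 + J2) / (J1 + J2))]) :
    ∀ a b : Fin 3 → ℝ,
      J * (vecMulVec a b - vecMulVec b a) + (vecMulVec a b - vecMulVec b a) * J =
        vecMulVec (A.mulVec a) (A.mulVec b) - vecMulVec (A.mulVec b) (A.mulVec a) := by
  intro a b
  subst hJ hA
  set s1 := Real.sqrt ((J1 + J2) * (J1 + J3) / (J2 + J3)) with hs1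
  set s2 := Real.sqrt ((J2 + J1) * (J2 + J3) / (J1 + J3)) with hs2
  set s3 := Real.sqrt ((J3 + J1) * (J3 + J2) / (J1 + J2)) with hs3
  have c1 : (J2 + J1) * (J2 + J3) / (J1 + J3) = (J1 + J2) * (J2 + J3) / (J1 + J3) := by ring
  have c2 : (J3 + J1) * (J3 + J2) / (J1 + J2) = (J1 + J3) * (J2 + J3) / (J1 + J2) := by ring
  have e12 : s1 * s2 = J1 + J2 := by
    rw [hs1, hs2]
    rw [c1]; exact sqrt_helper (J1 + J2) (J1 + J3) (J2 + J3) h12 h13 h23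
  have e13 : s1 * s3 = J1 + J3 := by
    rw [hs1, hs3]
    rw [c2, show (J1 + J2) * (J1 + J3) / (J2 + J3) = (J1 + J3) * (J1 + J2) / (J2 + J3) by ring]
    exact sqrt_helper (J1 + J3) (J1 + J2) (J2 + J3) h13 h12 h23
  have e23 : s2 * s3 = J2 + J3 := by
    rw [hs2, hs3]
    rw [c1, c2, show (J1 + J2) * (J2 + J3) / (J1 + J3) = (J2 + J3) * (J1 + J2) / (J1 + J3) by ring,
      show (J1 + J3) * (J2 + J3) / (J1 + J2) = (J2 + J3) * (J1 + J3) / (J1 + J2) by ring]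
    exact sqrt_helper (J2 + J3) (J1 + J2) (J1 + J3) h23 h12 h13
  clear hs1 hs2 hs3 c1 c2
  clear_value s1 s2 s3
  ext i j
  fin_cases i <;> fin_cases j <;>
    simp [Matrix.mul_apply, Fin.sum_univ_three, vecMulVec_apply, mulVec,
      dotProduct, Matrix.diagonal, Matrix.sub_apply] <;>
    first
      | ring1
      | linear_combination (b 0 * a 1 - a 0 * b 1) * e12
      | linear_combination (b 0 * a 2 - a 0 * b 2) * e13
      | linear_combination (b 1 * a 0 - a 1 * b 0) * e12
      | linear_combination (b 1 * a 2 - a 1 * b 2) * e23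
      | linear_combination (b 2 * a 0 - a 2 * b 0) * e13
      | linear_combination (b 2 * a 1 - a 2 * b 1) * e23
end

section
/- Let $n \geq 2$, $J_1 \geq 0$, $J_2 > 0$, and $\mathbb{J} = \mathrm{diag}(J_1, J_2, \dots, J_2)$ ($n\times n$). Set $A_1 = (J_1 + J_2)/\sqrt{2J_2}$, $A_2 = \sqrt{2J_2}$, and $A = \mathrm{diag}(A_1, A_2, \dots, A_2)$. Then for all $a, b \in \mathbb{R}^n$, $\mathbb{J}(ab^T - ba^T) + (ab^T - ba^T)\mathbb{J} = (Aa)(Ab)^T - (Ab)(Aa)^T$. -/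
open Matrix

theorem stmt14 {n : ℕ} (hn : 2 ≤ n) (J1 J2 : ℝ) (hJ1 : 0 ≤ J1) (hJ2 : 0 < J2)
    (J A : Matrix (Fin n) (Fin n) ℝ)
    (hJ : J = Matrix.diagonal (fun i : Fin n => if (i : ℕ) = 0 then J1 else J2))
    (hA : A = Matrix.diagonal (fun i : Fin n =>
      if (i : ℕ) = 0 then (J1 + J2) / Real.sqrt (2 * J2) else Real.sqrt (2 * J2))) :
    ∀ a b : Fin n → ℝ,
      J * (vecMulVec a b - vecMulVec b a) + (vecMulVec a b - vecMulVec b a) * J =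
        vecMulVec (A.mulVec a) (A.mulVec b) - vecMulVec (A.mulVec b) (A.mulVec a) := by
  subst hJ hA
  intro a b
  have h2 : (0:ℝ) ≤ 2 * J2 := by linarith
  have hs : Real.sqrt (2 * J2) * Real.sqrt (2 * J2) = 2 * J2 := Real.mul_self_sqrt h2
  have hs0 : Real.sqrt (2 * J2) ≠ 0 := by
    have := Real.sqrt_pos.mpr (by linarith : (0:ℝ) < 2 * J2)
    linarith
  ext i j
  simp only [Matrix.add_apply, Matrix.sub_apply, Matrix.diagonal_mul, Matrix.mul_diagonal,
    Matrix.vecMulVec_apply, Matrix.mulVec_diagonal]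
  by_cases hi : (i : ℕ) = 0 <;> by_cases hj : (j : ℕ) = 0 <;> simp only [hi, hj, if_true, if_false, if_pos, if_neg, ite_true, ite_false]
  · have : i = j := Fin.ext (hi.trans hj.symm)
    subst this; ring
  · field_simp
  · field_simp; ring
  · linear_combination (b i * a j - a i * b j) * hs
end

section
/- Let $\mathbb{J} = \mathrm{diag}(J_1, J_2, J_3, J_4)$ and $\mathbb{I}(\Omega) = \mathbb{J}\Omega + \Omega\mathbb{J}$ on $4\times 4$ skew-symmetric matrices. Let $e_1,\dots,e_4$ be the standard basis of $\mathbb{R}^4$. Then $\det\big(\mathbb{I}((e_1+e_3)\wedge(e_2+e_4))\big) = (J_1 - J_3)^2(J_2 - J_4)^2$, where $a\wedge b = ab^T - ba^T$. In particular, if $J_1 \neq J_3$ and $J_2 \neq J_4$, then $\mathbb{I}$ maps a rank-two skew-symmetric matrix to a matrix of rank $4$. -/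
open Matrix

theorem stmt15 (J1 J2 J3 J4 : ℝ) (J W : Matrix (Fin 4) (Fin 4) ℝ)
    (hJ : J = Matrix.diagonal ![J1, J2, J3, J4])
    (hW : W = vecMulVec (Pi.single 0 1 + Pi.single 2 1) (Pi.single 1 1 + Pi.single 3 1)
            - vecMulVec (Pi.single 1 1 + Pi.single 3 1) (Pi.single 0 1 + Pi.single 2 1)) :
    (J * W + W * J).det = (J1 - J3) ^ 2 * (J2 - J4) ^ 2 ∧
    (J1 ≠ J3 → J2 ≠ J4 → (J * W + W * J).rank = 4) := by
  have hM : J * W + W * J =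
      !![0, J1+J2, 0, J1+J4; -(J1+J2), 0, -(J2+J3), 0;
         0, J2+J3, 0, J3+J4; -(J1+J4), 0, -(J3+J4), 0] := by
    subst hJ hW
    ext i j
    fin_cases i <;> fin_cases j <;>
      simp [Matrix.mul_apply, Fin.sum_univ_four, vecMulVec_apply, Matrix.diagonal,
        Pi.single_apply] <;> ring
  have hdet : (J * W + W * J).det = (J1 - J3) ^ 2 * (J2 - J4) ^ 2 := by
    rw [hM]
    simp [Matrix.det_succ_row_zero, Fin.sum_univ_succ, Fin.succAbove, Matrix.submatrix_apply]
    ring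
  refine ⟨hdet, fun h13 h24 => ?_⟩
  have hne : (J * W + W * J).det ≠ 0 := by
    rw [hdet]
    exact mul_ne_zero (pow_ne_zero _ (sub_ne_zero.mpr h13)) (pow_ne_zero _ (sub_ne_zero.mpr h24))
  have : IsUnit (J * W + W * J) := by
    rw [Matrix.isUnit_iff_isUnit_det]
    exact isUnit_iff_ne_zero.mpr hne
  simpa using Matrix.rank_of_isUnit _ this
end

section
/- Let $J_1, J_2 > 0$ with $J_1 < J_2$, and let $P \geq 0$, $q_1 \in [-1, 1]$, and $p_1 \in \mathbb{R}$ satisfy $p_1^2 \leq (1 - q_1^2)P$. Define $H = \dfrac{(J_2 - J_1)p_1^2 + (J_1 + J_2)P}{2(J_1 + J_2)\big((J_1 - J_2)q_1^2 + 2J_2\big)}$. Then $\dfrac{P}{4J_2} \leq H \leq \dfrac{P}{2(J_1 + J_2)}$. -/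
theorem stmt16 (J1 J2 P q1 p1 : ℝ) (hJ1 : 0 < J1) (hJ2 : 0 < J2) (hlt : J1 < J2)
    (hP : 0 ≤ P) (hq1 : q1 ∈ Set.Icc (-1 : ℝ) 1) (hp1 : p1 ^ 2 ≤ (1 - q1 ^ 2) * P) :
    P / (4 * J2) ≤
        ((J2 - J1) * p1 ^ 2 + (J1 + J2) * P) /
          (2 * (J1 + J2) * ((J1 - J2) * q1 ^ 2 + 2 * J2)) ∧
      ((J2 - J1) * p1 ^ 2 + (J1 + J2) * P) /
          (2 * (J1 + J2) * ((J1 - J2) * q1 ^ 2 + 2 * J2)) ≤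
        P / (2 * (J1 + J2)) := by
  obtain ⟨h1, h2⟩ := hq1
  have hq : q1 ^ 2 ≤ 1 := by nlinarith
  have hD : 0 < (J1 - J2) * q1 ^ 2 + 2 * J2 := by nlinarith
  have hden : 0 < 2 * (J1 + J2) * ((J1 - J2) * q1 ^ 2 + 2 * J2) := by positivity
  have hp0 : 0 ≤ p1 ^ 2 := sq_nonneg _
  constructor
  · rw [div_le_div_iff₀ (by positivity) hden]
    nlinarith [mul_nonneg (mul_nonneg (mul_nonneg hP (sq_nonneg q1)) (sub_nonneg.mpr hlt.le)) (by positivity : (0:ℝ) ≤ J1 + J2),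
      mul_nonneg (mul_nonneg hp0 (sub_nonneg.mpr hlt.le)) hJ2.le]
  · rw [div_le_div_iff₀ hden (by positivity)]
    nlinarith [mul_le_mul_of_nonneg_left hp1 (by nlinarith : (0:ℝ) ≤ 2*(J1+J2)*(J2-J1))]
end
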